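/- Let f : I ⊆ (0,∞) → ℝ be a harmonically convex function, a, b ∈ I with a < b, f ∈ L¹[a,b], and α > 0. Then f(2ab/(a+b)) ≤ (Γ(α+1)/2)(ab/(b−a))^α [J^α_{(1/a)−}(f∘g)(1/b) + J^α_{(1/b)+}(f∘g)(1/a)] ≤ (f(a)+f(b))/2, where g(x) = 1/x. -/

import Mathlib

/-!
Under the substitution `x ↦ 1 / x`, a harmonically convex function on `[a, b]` becomes a convex
function `h` on `[1/b, 1/a]`, and the two fractional integrals become the right- and left-sided
Riemann–Liouville integrals of `h` over that interval. Both inequalities are then the fractional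
Hermite–Hadamard inequality for `h`: pairing `t` with its reflection `A + B - t`, convexity gives
`2 h((A + B)/2) ≤ h t + h (A + B - t) ≤ h A + h B`, and integrating against the weight
`(B - t) ^ (α - 1)`, of total mass `(B - A) ^ α / α`, yields the claim.
-/

noncomputable def Jplus (α a : ℝ) (h : ℝ → ℝ) (x : ℝ) : ℝ :=
  (1 / Real.Gamma α) * ∫ t in a..x, (x - t) ^ (α - 1) * h t

noncomputable def Jminus (α b : ℝ) (h : ℝ → ℝ) (x : ℝ) : ℝ :=
  (1 / Real.Gamma α) * ∫ t in x..b, (t - x) ^ (α - 1) * h t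

open MeasureTheory Set intervalIntegral

def HarmonicallyConvexOn (s : Set ℝ) (f : ℝ → ℝ) : Prop :=
  ∀ x ∈ s, ∀ y ∈ s, ∀ t ∈ Icc (0:ℝ) 1,
    f (x * y / (t * x + (1 - t) * y)) ≤ t * f y + (1 - t) * f x

theorem HarmonicallyConvexOn.convexOn_comp_inv {f : ℝ → ℝ} {a b : ℝ} (ha : 0 < a) (hb : 0 < b)
    (hf : HarmonicallyConvexOn (Icc a b) f) : ConvexOn ℝ (Icc b⁻¹ a⁻¹) (fun x => f x⁻¹) := by
  have hinv : ∀ u ∈ Icc b⁻¹ a⁻¹, 0 < u ∧ u⁻¹ ∈ Icc a b := fun u hu =>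
    have hu0 : 0 < u := (inv_pos.2 hb).trans_le hu.1
    ⟨hu0, (le_inv_comm₀ ha hu0).2 hu.2, (inv_le_comm₀ hu0 hb).2 hu.1⟩
  refine ⟨convex_Icc _ _, fun u hu v hv p q hp hq hpq => ?_⟩
  have hpos : 0 < p • u + q • v := (hinv _ (convex_Icc _ _ hu hv hp hq hpq)).1
  obtain rfl : q = 1 - p := by linarith
  obtain ⟨hu0, hu'⟩ := hinv u hu
  obtain ⟨hv0, hv'⟩ := hinv v hv
  rw [smul_eq_mul, smul_eq_mul] at hpos
  have hmean : v⁻¹ * u⁻¹ / (p * v⁻¹ + (1 - p) * u⁻¹) = (p * u + (1 - p) * v)⁻¹ := by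
    field_simp
  simpa only [hmean, smul_eq_mul] using hf v⁻¹ hv' u⁻¹ hu' p ⟨hp, by linarith⟩

theorem Set.add_sub_mem_Icc {A B t : ℝ} (ht : t ∈ Icc A B) : A + B - t ∈ Icc A B :=
  ⟨by linarith [ht.2], by linarith [ht.1]⟩

theorem intervalIntegral.integral_comp_add_sub (φ : ℝ → ℝ) (A B : ℝ) :
    ∫ t in A..B, φ (A + B - t) = ∫ t in A..B, φ t := by
  simp only [integral_comp_sub_left, add_sub_cancel_right, add_sub_cancel_left]

theorem intervalIntegral.integral_sub_rpow {α : ℝ} (hα : 0 < α) (A B : ℝ) :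
    ∫ t in A..B, (B - t) ^ (α - 1) = (B - A) ^ α / α := by
  rw [integral_comp_sub_left (fun x => x ^ (α - 1)) B, integral_rpow (Or.inl (by linarith)),
    sub_self, sub_add_cancel, Real.zero_rpow hα.ne', sub_zero]

theorem intervalIntegrable_sub_rpow {α : ℝ} (hα : 0 < α) (A B : ℝ) :
    IntervalIntegrable (fun t => (B - t) ^ (α - 1)) volume A B := by
  simpa using (intervalIntegrable_rpow' (a := B - A) (b := 0) (by linarith)).comp_sub_left B

namespace ConvexOn

variable {h : ℝ → ℝ} {A B : ℝ}

theorem two_mul_apply_midpoint_le {s : Set ℝ} (hh : ConvexOn ℝ s h) {x y : ℝ} (hx : x ∈ s)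
    (hy : y ∈ s) : 2 * h ((x + y) / 2) ≤ h x + h y := by
  have hconv := hh.2 hx hy (by norm_num : (0:ℝ) ≤ 1 / 2) (by norm_num : (0:ℝ) ≤ 1 / 2)
    (by norm_num)
  simp only [smul_eq_mul] at hconv
  rw [show 1 / 2 * x + 1 / 2 * y = (x + y) / 2 by ring] at hconv
  linarith

theorem two_mul_apply_midpoint_le_reflect (hh : ConvexOn ℝ (Icc A B) h) {t : ℝ}
    (ht : t ∈ Icc A B) : 2 * h ((A + B) / 2) ≤ h t + h (A + B - t) := by
  simpa only [add_sub_cancel] using hh.two_mul_apply_midpoint_le ht (add_sub_mem_Icc ht)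

theorem apply_add_apply_reflect_le (hh : ConvexOn ℝ (Icc A B) h) {t : ℝ} (ht : t ∈ Icc A B) :
    h t + h (A + B - t) ≤ h A + h B := by
  have hAB : A ≤ B := ht.1.trans ht.2
  rw [← segment_eq_Icc hAB] at ht
  obtain ⟨p, q, hp, hq, hpq, rfl⟩ := ht
  have hrefl : A + B - (p • A + q • B) = q • A + p • B := by
    simp only [smul_eq_mul]
    linear_combination (-(A + B)) * hpq
  rw [hrefl]
  have hA := left_mem_Icc.2 hAB
  have hB := right_mem_Icc.2 hAB
  have h₁ := hh.2 hA hB hp hq hpq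
  have h₂ := hh.2 hA hB hq hp (by linarith)
  simp only [smul_eq_mul] at h₁ h₂ ⊢
  linear_combination h₁ + h₂ + (h A + h B) * hpq

theorem exists_abs_le (hh : ConvexOn ℝ (Icc A B) h) : ∃ C, ∀ t ∈ Icc A B, |h t| ≤ C := by
  set U := max (h A) (h B)
  refine ⟨max |2 * h ((A + B) / 2) - U| |U|, fun t ht => ?_⟩
  have hAB : A ≤ B := ht.1.trans ht.2
  have hU : ∀ s ∈ Icc A B, h s ≤ U :=
    fun s hs => hh.le_max_of_mem_Icc (left_mem_Icc.2 hAB) (right_mem_Icc.2 hAB) hs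
  refine abs_le_max_abs_abs ?_ (hU t ht)
  linarith [hh.two_mul_apply_midpoint_le_reflect ht, hU _ (add_sub_mem_Icc ht)]

theorem intervalIntegrable_mul (hh : ConvexOn ℝ (Icc A B) h) (hAB : A ≤ B) {w : ℝ → ℝ}
    (hw : IntervalIntegrable w volume A B) :
    IntervalIntegrable (fun t => w t * h t) volume A B := by
  obtain ⟨C, hC⟩ := hh.exists_abs_le
  have hcont : ContinuousOn h (Ioo A B) := by
    simpa only [interior_Icc] using hh.continuousOn_interior
  rw [intervalIntegrable_iff_integrableOn_Ioo_of_le hAB] at hw ⊢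
  exact hw.mul_bdd (hcont.aestronglyMeasurable measurableSet_Ioo)
    ((ae_restrict_iff' measurableSet_Ioo).2
      (ae_of_all _ fun t ht => hC t (Ioo_subset_Icc_self ht)))

theorem comp_reflect (hh : ConvexOn ℝ (Icc A B) h) :
    ConvexOn ℝ (Icc A B) (fun t => h (A + B - t)) := by
  refine ⟨convex_Icc _ _, fun x hx y hy p q hp hq hpq => ?_⟩
  have hrefl : A + B - (p • x + q • y) = p • (A + B - x) + q • (A + B - y) := by
    simp only [smul_eq_mul]
    linear_combination (-(A + B)) * hpq
  simpa only [hrefl] using hh.2 (add_sub_mem_Icc hx) (add_sub_mem_Icc hy) hp hq hpq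

theorem weighted_hermiteHadamard (hh : ConvexOn ℝ (Icc A B) h) (hAB : A ≤ B) {w : ℝ → ℝ}
    (hw : IntervalIntegrable w volume A B) (hw₀ : ∀ t ∈ Icc A B, 0 ≤ w t) :
    2 * h ((A + B) / 2) * (∫ t in A..B, w t) ≤
        (∫ t in A..B, w t * h t) + ∫ t in A..B, w (A + B - t) * h t ∧
      (∫ t in A..B, w t * h t) + (∫ t in A..B, w (A + B - t) * h t) ≤
        (h A + h B) * ∫ t in A..B, w t := by
  have hsum : (∫ t in A..B, w t * h t) + (∫ t in A..B, w (A + B - t) * h t) =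
      ∫ t in A..B, w t * (h t + h (A + B - t)) := by
    rw [← integral_comp_add_sub (fun t => w (A + B - t) * h t)]
    simp only [sub_sub_cancel, mul_add]
    exact (integral_add (hh.intervalIntegrable_mul hAB hw)
      (hh.comp_reflect.intervalIntegrable_mul hAB hw)).symm
  have hint := (hh.add hh.comp_reflect).intervalIntegrable_mul hAB hw
  rw [hsum]
  constructor
  · rw [mul_comm, ← intervalIntegral.integral_mul_const]
    refine integral_mono_on hAB (hw.mul_const _) hint fun t ht => ?_
    exact mul_le_mul_of_nonneg_left (hh.two_mul_apply_midpoint_le_reflect ht) (hw₀ t ht)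
  · rw [mul_comm, ← intervalIntegral.integral_mul_const]
    refine integral_mono_on hAB hint (hw.mul_const _) fun t ht => ?_
    exact mul_le_mul_of_nonneg_left (hh.apply_add_apply_reflect_le ht) (hw₀ t ht)

theorem hermiteHadamard_fractional (hh : ConvexOn ℝ (Icc A B) h) (hAB : A < B) {α : ℝ}
    (hα : 0 < α) :
    h ((A + B) / 2) ≤
        Real.Gamma (α + 1) / (2 * (B - A) ^ α) * (Jminus α B h A + Jplus α A h B) ∧
      Real.Gamma (α + 1) / (2 * (B - A) ^ α) * (Jminus α B h A + Jplus α A h B) ≤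
        (h A + h B) / 2 := by
  have hHH := hh.weighted_hermiteHadamard hAB.le (intervalIntegrable_sub_rpow hα A B)
    fun t ht => Real.rpow_nonneg (sub_nonneg.2 ht.2) _
  simp only [integral_sub_rpow hα, show ∀ t, B - (A + B - t) = t - A from fun t => by ring]
    at hHH
  have hK : 0 < (B - A) ^ α / α := by have := sub_pos.2 hAB; positivity
  have hJ : Real.Gamma (α + 1) / (2 * (B - A) ^ α) * (Jminus α B h A + Jplus α A h B) =
      ((∫ t in A..B, (B - t) ^ (α - 1) * h t) + ∫ t in A..B, (t - A) ^ (α - 1) * h t) /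
        (2 * ((B - A) ^ α / α)) := by
    have := (Real.Gamma_pos_of_pos hα).ne'
    rw [Jminus, Jplus, Real.Gamma_add_one hα.ne']
    field_simp
    ring
  rw [hJ, le_div_iff₀ (mul_pos two_pos hK), div_le_iff₀ (mul_pos two_pos hK)]
  constructor <;> linarith [hHH.1, hHH.2]

end ConvexOn

theorem stmt_4_general (f : ℝ → ℝ) (a b : ℝ) (ha : 0 < a) (hab : a < b)
    (hf : ∀ x ∈ Set.Icc a b, ∀ y ∈ Set.Icc a b, ∀ t ∈ Set.Icc (0:ℝ) 1,
      f (x * y / (t * x + (1 - t) * y)) ≤ t * f y + (1 - t) * f x)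
    (α : ℝ) (hα : 0 < α) (g : ℝ → ℝ) (hg : g = fun x => 1 / x) :
    f (2 * a * b / (a + b)) ≤
      (Real.Gamma (α + 1) / 2) * (a * b / (b - a)) ^ α *
        (Jminus α (1 / a) (f ∘ g) (1 / b) + Jplus α (1 / b) (f ∘ g) (1 / a)) ∧
    (Real.Gamma (α + 1) / 2) * (a * b / (b - a)) ^ α *
        (Jminus α (1 / a) (f ∘ g) (1 / b) + Jplus α (1 / b) (f ∘ g) (1 / a)) ≤
      (f a + f b) / 2 := by
  subst hg
  have hb : 0 < b := ha.trans hab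
  have hHH := (HarmonicallyConvexOn.convexOn_comp_inv ha hb hf).hermiteHadamard_fractional
    ((inv_lt_inv₀ hb ha).2 hab) hα
  have hcoef : Real.Gamma (α + 1) / 2 * (a * b / (b - a)) ^ α =
      Real.Gamma (α + 1) / (2 * (a⁻¹ - b⁻¹) ^ α) := by
    rw [show a⁻¹ - b⁻¹ = (a * b / (b - a))⁻¹ by field_simp,
      Real.inv_rpow (by have := sub_pos.2 hab; positivity)]
    field_simp
  have hmid : 2 * a * b / (a + b) = ((b⁻¹ + a⁻¹) / 2)⁻¹ := by
    field_simp
  simp only [one_div, Function.comp_def, hcoef, hmid]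
  simpa only [inv_inv, add_comm (f b)] using hHH

theorem stmt_4 (f : ℝ → ℝ) (a b : ℝ) (ha : 0 < a) (hab : a < b)
    (hf : ∀ x ∈ Set.Icc a b, ∀ y ∈ Set.Icc a b, ∀ t ∈ Set.Icc (0:ℝ) 1,
      f (x * y / (t * x + (1 - t) * y)) ≤ t * f y + (1 - t) * f x)
    (hint : IntervalIntegrable f MeasureTheory.volume a b)
    (α : ℝ) (hα : 0 < α) (g : ℝ → ℝ) (hg : g = fun x => 1 / x) :
    f (2 * a * b / (a + b)) ≤
      (Real.Gamma (α + 1) / 2) * (a * b / (b - a)) ^ α *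
        (Jminus α (1 / a) (f ∘ g) (1 / b) + Jplus α (1 / b) (f ∘ g) (1 / a)) ∧
    (Real.Gamma (α + 1) / 2) * (a * b / (b - a)) ^ α *
        (Jminus α (1 / a) (f ∘ g) (1 / b) + Jplus α (1 / b) (f ∘ g) (1 / a)) ≤
      (f a + f b) / 2 :=
  stmt_4_general f a b ha hab hf α hα g hg
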